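/- arXiv:1803.03250 — 2 statements merged into one kernel-verified Lean document; each statement's English description precedes it below -/
import Mathlib

section
/- Let L = L₀ ⊕ L₀ ⊕ U ⊕ U ⊕ U with involution τ(x,y,z₁,z₂,z₃) = (y,x,z₂,z₁,−z₃), and let Λ = ℤ ⊕ L ⊕ ℤ be the Mukai lattice, with τ extended to Λ by acting as the identity on the two ℤ factors. Let β = e + f in the third U summand (so τβ = −β and ⟨β,β⟩ = 2), and define T = e^β ∘ τ on Λ⊗ℚ, where e^β(r,c,s) = (r, c + rβ, s + ⟨c,β⟩ + r). Then T maps the integral Mukai lattice Λ into itself and is an involutive isometry of Λ. -/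
/-!
Write `τ` also for its extension to the Mukai lattice. B-field transforms of an even symmetric
lattice are Mukai isometries with `e^β ∘ e^γ = e^(β+γ)`, and the isometry `τ` conjugates `e^β`
to `e^(τβ)`. Hence `T = e^β ∘ τ` is an isometry, and since `τβ = -β`,
`T² = e^β ∘ e^(-β) ∘ τ² = id`.
-/

/-- The hyperbolic plane form on `U = ℤ × ℤ`. -/
def Ubil (z w : ℤ × ℤ) : ℤ := z.1 * w.2 + z.2 * w.1

/-- The lattice `L = L₀ ⊕ L₀ ⊕ U ⊕ U ⊕ U`. -/
abbrev LatE (L₀ : Type*) := L₀ × L₀ × (ℤ × ℤ) × (ℤ × ℤ) × (ℤ × ℤ)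

/-- The orthogonal direct sum form on `L = L₀ ⊕ L₀ ⊕ U ⊕ U ⊕ U`. -/
def Lbil {L₀ : Type*} [AddCommGroup L₀] [Module ℤ L₀]
    (B₀ : L₀ →ₗ[ℤ] L₀ →ₗ[ℤ] ℤ) (a b : LatE L₀) : ℤ :=
  B₀ a.1 b.1 + B₀ a.2.1 b.2.1 + Ubil a.2.2.1 b.2.2.1 +
    Ubil a.2.2.2.1 b.2.2.2.1 + Ubil a.2.2.2.2 b.2.2.2.2

/-- The involution `τ(x,y,z₁,z₂,z₃) = (y,x,z₂,z₁,−z₃)`. -/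
def tauL {L₀ : Type*} [AddCommGroup L₀] (a : LatE L₀) : LatE L₀ :=
  (a.2.1, a.1, a.2.2.2.1, a.2.2.1, -a.2.2.2.2)

/-- The Mukai lattice `Λ = ℤ ⊕ L ⊕ ℤ`. -/
abbrev Muk (L₀ : Type*) := ℤ × LatE L₀ × ℤ

/-- The Mukai pairing `⟨(r,c,s),(r',c',s')⟩ = ⟨c,c'⟩ − rs' − r's`. -/
def mukai {L₀ : Type*} [AddCommGroup L₀] [Module ℤ L₀]
    (B₀ : L₀ →ₗ[ℤ] L₀ →ₗ[ℤ] ℤ) (v w : Muk L₀) : ℤ :=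
  Lbil B₀ v.2.1 w.2.1 - v.1 * w.2.2 - w.1 * v.2.2

/-- The B-field `β = e + f` in the third `U` summand. -/
def betaL (L₀ : Type*) [AddCommGroup L₀] : LatE L₀ :=
  (0, 0, 0, 0, (1, 1))

/-- `T = e^β ∘ τ` on the Mukai lattice, where `e^β(r,c,s) = (r, c + rβ, s + ⟨c,β⟩ + r)`
(using `⟨β,β⟩ = 2`). -/
def Tmuk {L₀ : Type*} [AddCommGroup L₀] [Module ℤ L₀]
    (B₀ : L₀ →ₗ[ℤ] L₀ →ₗ[ℤ] ℤ) (v : Muk L₀) : Muk L₀ :=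
  (v.1, tauL v.2.1 + v.1 • betaL L₀,
    v.2.2 + Lbil B₀ (tauL v.2.1) (betaL L₀) + v.1)

section tauL

variable {L₀ : Type*} [AddCommGroup L₀]

theorem tauL_tauL (a : LatE L₀) : tauL (tauL a) = a := by
  simp [tauL]

theorem tauL_add (a b : LatE L₀) : tauL (a + b) = tauL a + tauL b := by
  simp [tauL, add_comm]

theorem tauL_smul (n : ℤ) (a : LatE L₀) : tauL (n • a) = n • tauL a := by
  simp [tauL]

theorem tauL_betaL : tauL (betaL L₀) = -betaL L₀ := by
  simp [tauL, betaL]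

def tauMuk (v : Muk L₀) : Muk L₀ := (v.1, tauL v.2.1, v.2.2)

theorem tauMuk_tauMuk (v : Muk L₀) : tauMuk (tauMuk v) = v := by
  simp [tauMuk, tauL_tauL]

end tauL

section Lbil

variable {L₀ : Type*} [AddCommGroup L₀] [Module ℤ L₀] (B₀ : L₀ →ₗ[ℤ] L₀ →ₗ[ℤ] ℤ)

theorem Lbil_add_left (a b c : LatE L₀) : Lbil B₀ (a + b) c = Lbil B₀ a c + Lbil B₀ b c := by
  simp only [Lbil, Ubil, Prod.fst_add, Prod.snd_add, map_add, LinearMap.add_apply]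
  ring

theorem Lbil_add_right (a b c : LatE L₀) : Lbil B₀ a (b + c) = Lbil B₀ a b + Lbil B₀ a c := by
  simp only [Lbil, Ubil, Prod.fst_add, Prod.snd_add, map_add]
  ring

theorem Lbil_smul_left (n : ℤ) (a b : LatE L₀) : Lbil B₀ (n • a) b = n * Lbil B₀ a b := by
  simp only [Lbil, Ubil, Prod.smul_fst, Prod.smul_snd, map_zsmul, LinearMap.smul_apply,
    smul_eq_mul]
  ring

theorem Lbil_smul_right (n : ℤ) (a b : LatE L₀) : Lbil B₀ a (n • b) = n * Lbil B₀ a b := by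
  simp only [Lbil, Ubil, Prod.smul_fst, Prod.smul_snd, map_zsmul, smul_eq_mul]
  ring

theorem Lbil_comm (hsymm : ∀ a b, B₀ a b = B₀ b a) (a b : LatE L₀) :
    Lbil B₀ a b = Lbil B₀ b a := by
  simp only [Lbil, Ubil, hsymm a.1, hsymm a.2.1]
  ring

theorem even_Lbil_self (heven : ∀ a, Even (B₀ a a)) (a : LatE L₀) : Even (Lbil B₀ a a) := by
  have hU : ∀ z : ℤ × ℤ, Even (Ubil z z) := fun z => ⟨z.1 * z.2, by simp only [Ubil]; ring⟩
  exact (((((heven _).add (heven _)).add (hU _)).add (hU _)).add (hU _))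

theorem Lbil_tauL_tauL (a b : LatE L₀) : Lbil B₀ (tauL a) (tauL b) = Lbil B₀ a b := by
  simp only [Lbil, Ubil, tauL, Prod.fst_neg, Prod.snd_neg]
  ring

theorem Lbil_betaL_betaL : Lbil B₀ (betaL L₀) (betaL L₀) = 2 := by
  simp [Lbil, Ubil, betaL]

/-- `e^β(r,c,s) = (r, c + rβ, s + ⟨c,β⟩ + r⟨β,β⟩/2)`. The integer division is exact for an even
form, and `•` on `LatE L₀` elaborates to `zsmul`, so the `zsmul_*` lemmas apply, not `smul_*`. -/
def bField (β : LatE L₀) (v : Muk L₀) : Muk L₀ :=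
  (v.1, v.2.1 + v.1 • β, v.2.2 + Lbil B₀ v.2.1 β + v.1 * (Lbil B₀ β β / 2))

theorem mukai_tauMuk (v w : Muk L₀) : mukai B₀ (tauMuk v) (tauMuk w) = mukai B₀ v w := by
  simp only [mukai, tauMuk, Lbil_tauL_tauL]

theorem bField_zero (v : Muk L₀) : bField B₀ 0 v = v := by
  simp [bField, Lbil, Ubil, zsmul_zero]

theorem tauMuk_bField (β : LatE L₀) (v : Muk L₀) :
    tauMuk (bField B₀ β v) = bField B₀ (tauL β) (tauMuk v) := by
  simp only [tauMuk, bField, tauL_add, tauL_smul, Lbil_tauL_tauL]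

theorem bField_bField (hsymm : ∀ a b, B₀ a b = B₀ b a) (heven : ∀ a, Even (B₀ a a))
    (β γ : LatE L₀) (v : Muk L₀) :
    bField B₀ β (bField B₀ γ v) = bField B₀ (β + γ) v := by
  obtain ⟨m, hm⟩ := even_Lbil_self B₀ heven β
  obtain ⟨n, hn⟩ := even_Lbil_self B₀ heven γ
  have hsq : Lbil B₀ (β + γ) (β + γ) = (m + Lbil B₀ β γ + n) + (m + Lbil B₀ β γ + n) := by
    rw [Lbil_add_left, Lbil_add_right, Lbil_add_right, hm, hn, Lbil_comm B₀ hsymm γ β]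
    ring
  simp only [bField, Prod.mk.injEq, true_and, hsq, hm, hn, Lbil_add_left, Lbil_add_right,
    Lbil_smul_left, Lbil_comm B₀ hsymm γ β]
  refine ⟨by rw [zsmul_add, add_comm (v.1 • β), add_assoc], ?_⟩
  simp only [show ∀ k : ℤ, (k + k) / 2 = k by omega]
  ring

theorem mukai_bField (hsymm : ∀ a b, B₀ a b = B₀ b a) (heven : ∀ a, Even (B₀ a a))
    (β : LatE L₀) (v w : Muk L₀) : mukai B₀ (bField B₀ β v) (bField B₀ β w) = mukai B₀ v w := by
  obtain ⟨m, hm⟩ := even_Lbil_self B₀ heven β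
  simp only [mukai, bField, Lbil_add_left, Lbil_add_right, Lbil_smul_left, Lbil_smul_right, hm,
    show (m + m) / 2 = m by omega]
  rw [Lbil_comm B₀ hsymm β w.2.1]
  ring

theorem Tmuk_eq_bField_tauMuk (v : Muk L₀) :
    Tmuk B₀ v = bField B₀ (betaL L₀) (tauMuk v) := by
  simp [Tmuk, bField, tauMuk, Lbil_betaL_betaL]

end Lbil

/-- `T = e^β ∘ τ` maps the integral Mukai lattice to itself and is an involutive isometry. -/
theorem Tmuk_involutive_isometry {L₀ : Type*} [AddCommGroup L₀] [Module ℤ L₀]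
    (B₀ : L₀ →ₗ[ℤ] L₀ →ₗ[ℤ] ℤ)
    (hsymm : ∀ a b, B₀ a b = B₀ b a)
    (heven : ∀ a, Even (B₀ a a)) :
    (∀ v : Muk L₀, Tmuk B₀ (Tmuk B₀ v) = v) ∧
    (∀ v w : Muk L₀, mukai B₀ (Tmuk B₀ v) (Tmuk B₀ w) = mukai B₀ v w) := by
  refine ⟨fun v => ?_, fun v w => ?_⟩
  · rw [Tmuk_eq_bField_tauMuk, Tmuk_eq_bField_tauMuk, tauMuk_bField, tauMuk_tauMuk, tauL_betaL,
      bField_bField B₀ hsymm heven, add_neg_cancel, bField_zero]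
  · rw [Tmuk_eq_bField_tauMuk, Tmuk_eq_bField_tauMuk, mukai_bField B₀ hsymm heven, mukai_tauMuk]
end

section
/- In the setting of the Mukai lattice Λ with T = e^β ∘ τ as above, every T-invariant vector v ∈ Λ satisfies ⟨(0,0,1), v⟩ ≡ ⟨v, v⟩ (mod 4), where (0,0,1) denotes the vector with r = 0, c = 0, s = 1. -/
/-!
A `T`-invariant vector has the shape `v = (2a, (x, x, z, z, (a, a)), s)`, since `τ` swaps the two
`L₀` and the first two `U` summands and `e^β` shifts `-z₃` by `(r, r)`. Then `⟨(0,0,1), v⟩ = -2a` and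
`⟨v, v⟩ = 2⟨x, x⟩ + 4 z₁z₂ + 2a² - 4as`, so the difference is `-2a(a+1) - 2⟨x, x⟩` modulo 4, and both
`a(a+1)` and `⟨x, x⟩` are even.
-/

section MukaiLattice

variable {L₀ : Type*} [AddCommGroup L₀] [Module ℤ L₀] (B₀ : L₀ →ₗ[ℤ] L₀ →ₗ[ℤ] ℤ)

theorem Ubil_self (z : ℤ × ℤ) : Ubil z z = 2 * (z.1 * z.2) := by
  simp only [Ubil]
  ring

theorem mukai_zero_zero_one (v : Muk L₀) : mukai B₀ (0, 0, 1) v = -v.1 := by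
  simp [mukai, Lbil, Ubil]

theorem Tmuk_eq_self_iff (v : Muk L₀) :
    Tmuk B₀ v = v ↔ ∃ (a s : ℤ) (x : L₀) (z : ℤ × ℤ), v = (2 * a, (x, x, z, z, (a, a)), s) := by
  constructor
  · obtain ⟨r, ⟨x, y, z₁, z₂, ⟨a, b⟩⟩, s⟩ := v
    intro h
    simp only [Tmuk, tauL, betaL, Prod.ext_iff, Prod.fst_add, Prod.snd_add, Prod.smul_mk,
      zsmul_zero, smul_eq_mul, mul_one, Prod.fst_neg, Prod.snd_neg, add_zero] at h
    obtain ⟨-, ⟨hyx, -, ⟨h₁, h₂⟩, -, ha, hb⟩, -⟩ := h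
    subst hyx
    obtain rfl : z₂ = z₁ := Prod.ext h₁ h₂
    obtain rfl : r = 2 * a := by omega
    obtain rfl : a = b := by omega
    exact ⟨a, s, y, z₂, rfl⟩
  · rintro ⟨a, s, x, z, rfl⟩
    simp [Tmuk, tauL, betaL, Lbil, Ubil, Prod.ext_iff, zsmul_zero]
    omega

theorem mukai_self_of_fixed (a s : ℤ) (x : L₀) (z : ℤ × ℤ) :
    mukai B₀ (2 * a, (x, x, z, z, (a, a)), s) (2 * a, (x, x, z, z, (a, a)), s) =
      2 * B₀ x x + 4 * (z.1 * z.2) + 2 * a ^ 2 - 4 * a * s := by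
  simp only [mukai, Lbil, Ubil_self]
  ring

end MukaiLattice

theorem char_vector_mod_four_general {L₀ : Type*} [AddCommGroup L₀] [Module ℤ L₀]
    (B₀ : L₀ →ₗ[ℤ] L₀ →ₗ[ℤ] ℤ)
    (heven : ∀ a, Even (B₀ a a)) :
    ∀ v : Muk L₀, Tmuk B₀ v = v →
      (4 : ℤ) ∣ (mukai B₀ ((0 : ℤ), (0 : LatE L₀), (1 : ℤ)) v - mukai B₀ v v) := by
  intro v hv
  obtain ⟨a, s, x, z, rfl⟩ := (Tmuk_eq_self_iff B₀ v).mp hv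
  rw [mukai_zero_zero_one, mukai_self_of_fixed]
  obtain ⟨m, hm⟩ := heven x
  obtain ⟨t, ht⟩ := Int.even_mul_succ_self a
  exact ⟨-m - z.1 * z.2 - t + a * s, by linear_combination -2 * hm - 2 * ht⟩

/-- Every `T`-invariant `v ∈ Λ` satisfies `⟨(0,0,1), v⟩ ≡ ⟨v,v⟩ (mod 4)`. -/
theorem char_vector_mod_four {L₀ : Type*} [AddCommGroup L₀] [Module ℤ L₀]
    (B₀ : L₀ →ₗ[ℤ] L₀ →ₗ[ℤ] ℤ)
    (hsymm : ∀ a b, B₀ a b = B₀ b a)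
    (heven : ∀ a, Even (B₀ a a)) :
    ∀ v : Muk L₀, Tmuk B₀ v = v →
      (4 : ℤ) ∣ (mukai B₀ ((0 : ℤ), (0 : LatE L₀), (1 : ℤ)) v - mukai B₀ v v) :=
  char_vector_mod_four_general B₀ heven
end
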